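/- Let X and Y be random variables on a finite probability space. For any c > 0, the joint t-entropy dominates each marginal: H_c(X,Y) ≥ max{H_c(X), H_c(Y)}. -/

import Mathlib

open Real

/-- Joint t-entropy of a joint pmf `p : Fin n → Fin m → ℝ`. -/
noncomputable def tEntropyJoint {n m : ℕ} (c : ℝ) (p : Fin n → Fin m → ℝ) : ℝ :=
  (∑ i, ∑ j, p i j * Real.arctan ((p i j) ^ (-c))) - Real.pi / 4

/-- t-entropy of the first marginal of a joint pmf. -/
noncomputable def tEntropyMargX {n m : ℕ} (c : ℝ) (p : Fin n → Fin m → ℝ) : ℝ :=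
  (∑ i, (∑ j, p i j) * Real.arctan ((∑ j, p i j) ^ (-c))) - Real.pi / 4

/-- t-entropy of the second marginal of a joint pmf. -/
noncomputable def tEntropyMargY {n m : ℕ} (c : ℝ) (p : Fin n → Fin m → ℝ) : ℝ :=
  (∑ j, (∑ i, p i j) * Real.arctan ((∑ i, p i j) ^ (-c))) - Real.pi / 4

/- Since `x ↦ arctan (x ^ (-c))` is antitone on `(0, ∞)`, replacing the weight of each joint
atom by the larger weight of its marginal class can only decrease its summand; summing over each
class gives the two marginal inequalities. -/

lemma mul_arctan_rpow_neg_le_of_le {c : ℝ} (hc : 0 ≤ c) {a s : ℝ} (ha : 0 ≤ a) (has : a ≤ s) :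
    a * arctan (s ^ (-c)) ≤ a * arctan (a ^ (-c)) := by
  rcases ha.eq_or_lt with rfl | ha_pos
  · simp
  · exact mul_le_mul_of_nonneg_left
      (arctan_strictMono.monotone (rpow_le_rpow_of_nonpos ha_pos has (neg_nonpos.2 hc))) ha

lemma sum_mul_arctan_rpow_neg_le {ι : Type*} {c : ℝ} (hc : 0 ≤ c) (s : Finset ι) (q : ι → ℝ)
    (hq : ∀ j ∈ s, 0 ≤ q j) :
    (∑ j ∈ s, q j) * arctan ((∑ j ∈ s, q j) ^ (-c)) ≤ ∑ j ∈ s, q j * arctan (q j ^ (-c)) := by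
  rw [Finset.sum_mul]
  exact Finset.sum_le_sum fun j hj =>
    mul_arctan_rpow_neg_le_of_le hc (hq j hj) (Finset.single_le_sum hq hj)

theorem tEntropy_joint_ge_max_general {n m : ℕ} (c : ℝ) (hc : 0 < c)
    (p : Fin n → Fin m → ℝ) (hp : ∀ i j, 0 ≤ p i j) :
    max (tEntropyMargX c p) (tEntropyMargY c p) ≤ tEntropyJoint c p := by
  unfold tEntropyMargX tEntropyMargY tEntropyJoint
  refine max_le (sub_le_sub_right ?_ _) (sub_le_sub_right ?_ _)
  · exact Finset.sum_le_sum fun i _ =>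
      sum_mul_arctan_rpow_neg_le hc.le _ (p i) fun j _ => hp i j
  · rw [Finset.sum_comm]
    exact Finset.sum_le_sum fun j _ =>
      sum_mul_arctan_rpow_neg_le hc.le _ (fun i => p i j) fun i _ => hp i j

theorem tEntropy_joint_ge_max {n m : ℕ} (c : ℝ) (hc : 0 < c)
    (p : Fin n → Fin m → ℝ) (hp : ∀ i j, 0 ≤ p i j)
    (hsum : ∑ i, ∑ j, p i j = 1) :
    max (tEntropyMargX c p) (tEntropyMargY c p) ≤ tEntropyJoint c p :=
  tEntropy_joint_ge_max_general c hc p hp
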